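/- arXiv:math/0609777 — 5 statements merged into one kernel-verified Lean document; each statement's English description precedes it below -/
import Mathlib

section
/- Let Q = Σ_{n≥0} (B_n/n!) T^n be the exponential generating formal power series of the Bernoulli numbers (with B₁ = −1/2), so that Q = T/(e^T − 1), and for 0 ≤ ℓ ≤ j let a^j_ℓ be the coefficient of T^{j−ℓ} in Q^{j+1}. Then these numbers satisfy the recurrence Σ_{s=1}^{j−ℓ} a^j_{ℓ+s} / s! = a^{j−1}_ℓ for every j ≥ 1 and every ℓ ∈ {0, 1, …, j−1}. -/
/-! Since `Q (eᵀ - 1) = T`, we have `Q^(j+1) (eᵀ - 1) = Q^j T`; the recurrence is the comparison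
of the coefficients of `T^(j-ℓ)` on both sides. -/

open PowerSeries Finset

/-- `a j ℓ` is the coefficient of `T^(j-ℓ)` in `Q^(j+1)`, where
`Q = Σ_{n≥0} (Bₙ/n!) Tⁿ = T/(eᵀ - 1)` is the Bernoulli generating power series
(with `B₁ = -1/2`). -/
noncomputable def bernCoef (j ℓ : ℕ) : ℚ :=
  PowerSeries.coeff (R := ℚ) (j - ℓ) ((bernoulliPowerSeries ℚ) ^ (j + 1))

theorem coeff_mul_exp_sub_one {K : Type*} [Field K] [Algebra ℚ K] (φ : K⟦X⟧) (n : ℕ) :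
    coeff n (φ * (exp K - 1)) = ∑ s ∈ Icc 1 n, coeff (n - s) φ / s.factorial := by
  rw [mul_comm, coeff_mul,
    Nat.sum_antidiagonal_eq_sum_range_succ (fun s k => coeff s (exp K - 1) * coeff k φ),
    range_eq_Ico, sum_eq_sum_Ico_succ_bot n.succ_pos, Nat.succ_eq_add_one,
    Ico_add_one_right_eq_Icc, show coeff 0 (exp K - 1) = 0 by simp, zero_mul, zero_add]
  refine sum_congr rfl fun s hs => ?_
  rw [map_sub, coeff_exp, coeff_one, if_neg (by grind)]
  simp [div_eq_inv_mul]

theorem bernoulliPowerSeries_pow_succ_mul_exp_sub_one (A : Type*) [CommRing A] [Algebra ℚ A]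
    (j : ℕ) : bernoulliPowerSeries A ^ (j + 1) * (exp A - 1) = bernoulliPowerSeries A ^ j * X := by
  rw [pow_succ, mul_assoc, bernoulliPowerSeries_mul_exp_sub_one]

/-- The coefficients `a^j_ℓ` satisfy the recurrence
`Σ_{s=1}^{j-ℓ} a^j_{ℓ+s} / s! = a^{j-1}_ℓ` for `j ≥ 1`, `0 ≤ ℓ ≤ j-1`. -/
theorem bernCoef_recurrence (j : ℕ) (hj : 1 ≤ j) (ℓ : ℕ) (hℓ : ℓ < j) :
    ∑ s ∈ Finset.Icc 1 (j - ℓ), bernCoef j (ℓ + s) / (Nat.factorial s : ℚ)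
      = bernCoef (j - 1) ℓ := by
  obtain ⟨m, hm⟩ : ∃ m, j - ℓ = m + 1 := ⟨j - 1 - ℓ, by omega⟩
  calc ∑ s ∈ Icc 1 (j - ℓ), bernCoef j (ℓ + s) / s.factorial
      = coeff (j - ℓ) (bernoulliPowerSeries ℚ ^ (j + 1) * (exp ℚ - 1)) := by
        rw [coeff_mul_exp_sub_one]
        refine sum_congr rfl fun s _ => ?_
        rw [bernCoef, Nat.sub_add_eq]
    _ = coeff m (bernoulliPowerSeries ℚ ^ j) := by
        rw [bernoulliPowerSeries_pow_succ_mul_exp_sub_one, hm, coeff_succ_mul_X]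
    _ = bernCoef (j - 1) ℓ := by
        rw [bernCoef, Nat.sub_add_cancel hj]
        congr
        omega
end

section
/- With a^j_ℓ the coefficient of T^{j−ℓ} in Q^{j+1}, where Q = T/(e^T − 1) is the Bernoulli generating series, one has the boundary values a^j_j = 1 and a^j_0 = (−1)^j for every integer j ≥ 0. -/
open PowerSeries

section
variable {A : Type*} [CommRing A] [Algebra ℚ A]

theorem constantCoeff_bernoulliPowerSeries :
    constantCoeff (bernoulliPowerSeries A) = 1 := by
  simp [bernoulliPowerSeries, ← coeff_zero_eq_constantCoeff_apply]

theorem X_mul_derivative_bernoulliPowerSeries :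
    X * d⁄dX A (bernoulliPowerSeries A)
      = bernoulliPowerSeries A - X * bernoulliPowerSeries A - bernoulliPowerSeries A ^ 2 := by
  set Q := bernoulliPowerSeries A
  have hQ : Q * (exp A - 1) = X := bernoulliPowerSeries_mul_exp_sub_one A
  have hQ' : d⁄dX A Q * (exp A - 1) + Q * exp A = 1 := by
    simpa [Derivation.leibniz, derivative_exp, add_comm, mul_comm] using congrArg (d⁄dX A) hQ
  linear_combination Q * hQ' - d⁄dX A Q * hQ - Q * hQ

theorem X_mul_derivative_bernoulliPowerSeries_pow (n : ℕ) :
    X * d⁄dX A (bernoulliPowerSeries A ^ (n + 1))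
      = ((n : A⟦X⟧) + 1) * (bernoulliPowerSeries A ^ (n + 1) - X * bernoulliPowerSeries A ^ (n + 1)
        - bernoulliPowerSeries A ^ (n + 2)) := by
  rw [derivative_pow, Nat.add_sub_cancel]
  push_cast
  linear_combination ((n : A⟦X⟧) + 1) * bernoulliPowerSeries A ^ n *
    X_mul_derivative_bernoulliPowerSeries (A := A)

theorem coeff_succ_bernoulliPowerSeries_pow_succ (n : ℕ) :
    coeff (n + 1) (bernoulliPowerSeries A ^ (n + 2))
      = -coeff n (bernoulliPowerSeries A ^ (n + 1)) := by
  have h := congrArg (coeff (n + 1)) (X_mul_derivative_bernoulliPowerSeries_pow (A := A) n)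
  have hcast : ((n : A⟦X⟧) + 1) = C ((n : A) + 1) := by simp
  rw [hcast, coeff_C_mul, coeff_succ_X_mul, coeff_derivative, map_sub, map_sub,
    coeff_succ_X_mul] at h
  have hunit : IsUnit ((n : A) + 1) := by
    simpa using (IsUnit.mk0 ((n : ℚ) + 1) (by positivity)).map (algebraMap ℚ A)
  apply hunit.mul_left_cancel
  linear_combination h

theorem coeff_bernoulliPowerSeries_pow_succ_self (n : ℕ) :
    coeff n (bernoulliPowerSeries A ^ (n + 1)) = (-1) ^ n := by
  induction n with
  | zero => simp [coeff_zero_eq_constantCoeff_apply, constantCoeff_bernoulliPowerSeries]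
  | succ n ih => rw [coeff_succ_bernoulliPowerSeries_pow_succ, ih, pow_succ, mul_neg_one]

end

/-- Boundary values: `a^j_j = 1` and `a^j_0 = (-1)^j` for every `j ≥ 0`. -/
theorem bernCoef_boundary (j : ℕ) :
    bernCoef j j = 1 ∧ bernCoef j 0 = (-1 : ℚ) ^ j := by
  refine ⟨?_, ?_⟩
  · simp [bernCoef, constantCoeff_bernoulliPowerSeries]
  · simpa [bernCoef] using coeff_bernoulliPowerSeries_pow_succ_self j
end

section
/- There exists a universal constant c > 0 such that for every integer j ≥ 0 and every ℓ ∈ {0, 1, …, j}, the coefficient a^j_ℓ satisfies |a^j_ℓ| ≤ c^j. -/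
open Finset PowerSeries Nat

theorem bernoulli_succ_div_factorial (n : ℕ) :
    bernoulli (n + 1) / (n + 1)! = -∑ k ∈ range (n + 1), bernoulli k / k ! / (n + 2 - k)! := by
  have h : ∑ k ∈ range (n + 2), bernoulli k / k ! / (n + 2 - k)! = 0 := by
    calc _ = (∑ k ∈ range (n + 2), ((n + 2).choose k : ℚ) * bernoulli k) / (n + 2)! := by
          rw [sum_div]
          refine sum_congr rfl fun k hk => ?_
          rw [Nat.cast_choose ℚ (mem_range.1 hk).le]
          field_simp
      _ = 0 := by rw [sum_bernoulli, if_neg (by omega), zero_div]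
  rw [sum_range_succ, show n + 2 - (n + 1) = 1 by omega] at h
  simp only [factorial_one, cast_one, div_one] at h
  linarith

theorem sum_range_one_div_factorial_sub_le {α : Type*} [Field α] [LinearOrder α]
    [IsStrictOrderedRing α] (n : ℕ) :
    ∑ k ∈ range (n + 1), (1 : α) / (n + 2 - k)! ≤ 3 / 4 := by
  calc _ = ∑ m ∈ range (n + 3) with 2 ≤ m, (1 : α) / m ! := by
        refine sum_nbij' (n + 2 - ·) (n + 2 - ·) ?_ ?_ ?_ ?_ ?_ <;>
          simp +contextual [mem_filter, mem_range] <;> omega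
    _ ≤ 3 / 4 := by
      have := Complex.sum_div_factorial_le (α := α) 2 (n + 3) two_pos
      norm_num at this ⊢
      exact this

theorem abs_bernoulli_div_factorial_le_one (n : ℕ) : |bernoulli n / n !| ≤ 1 := by
  induction n using Nat.strong_induction_on with
  | _ n ih =>
    rcases n with _ | n
    · simp
    rw [bernoulli_succ_div_factorial, abs_neg]
    calc _ ≤ ∑ k ∈ range (n + 1), |bernoulli k / k ! / (n + 2 - k)!| := abs_sum_le_sum_abs _ _
      _ ≤ ∑ k ∈ range (n + 1), (1 : ℚ) / (n + 2 - k)! := by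
        refine sum_le_sum fun k hk => ?_
        rw [abs_div, abs_of_pos (by positivity : (0 : ℚ) < (n + 2 - k)!)]
        gcongr
        exact ih k (by simpa [Nat.lt_succ_iff] using hk)
      _ ≤ 1 := (sum_range_one_div_factorial_sub_le n).trans (by norm_num)

theorem abs_coeff_pow_succ_le_choose {R : Type*} [CommRing R] [LinearOrder R]
    [IsStrictOrderedRing R] {f : R⟦X⟧} (hf : ∀ n, |coeff n f| ≤ 1) (k n : ℕ) :
    |coeff n (f ^ (k + 1))| ≤ (n + k).choose k := by
  induction k generalizing n with
  | zero => simpa using hf n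
  | succ k ih =>
    rw [pow_succ, coeff_mul, Nat.sum_antidiagonal_eq_sum_range_succ_mk]
    calc _ ≤ ∑ i ∈ range (n + 1), |coeff i (f ^ (k + 1)) * coeff (n - i) f| :=
          abs_sum_le_sum_abs _ _
      _ ≤ ∑ i ∈ range (n + 1), ((i + k).choose k : R) := by
        refine sum_le_sum fun i _ => ?_
        rw [abs_mul]
        exact mul_le_of_le_one_right (by positivity) (hf _) |>.trans (ih i)
      _ = (n + (k + 1)).choose (k + 1) := by
        rw [← Nat.cast_sum, sum_range_add_choose, add_assoc]

theorem abs_coeff_bernoulliPowerSeries_le_one (n : ℕ) :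
    |coeff n (bernoulliPowerSeries ℚ)| ≤ 1 := by
  simpa [bernoulliPowerSeries] using abs_bernoulli_div_factorial_le_one n

/-- There is a universal constant `c > 0` with `|a^j_ℓ| ≤ c^j` for all `0 ≤ ℓ ≤ j`. -/
theorem bernCoef_bound :
    ∃ c : ℝ, 0 < c ∧ ∀ j ℓ : ℕ, ℓ ≤ j → |(bernCoef j ℓ : ℝ)| ≤ c ^ j := by
  refine ⟨4, by norm_num, fun j ℓ _ => ?_⟩
  have hchoose : |bernCoef j ℓ| ≤ (j - ℓ + j).choose j :=
    abs_coeff_pow_succ_le_choose abs_coeff_bernoulliPowerSeries_le_one j (j - ℓ)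
  have hpow : (j - ℓ + j).choose j ≤ 4 ^ j :=
    calc _ ≤ 2 ^ (j - ℓ + j) := Nat.choose_le_two_pow _ _
      _ ≤ 2 ^ (2 * j) := Nat.pow_le_pow_right two_pos (by omega)
      _ = 4 ^ j := by rw [pow_mul]; norm_num
  rw [← Rat.cast_abs]
  exact_mod_cast hchoose.trans (by exact_mod_cast hpow)
end

section
/- Fix an integer k ≥ 2 and let a^j_ℓ be the coefficient of T^{j−ℓ} in Q^{j+1}, where Q = T/(e^T − 1). There exists a sequence of real numbers (δ_m)_{m≥0} such that for every integer j ≥ 1 and every ℓ ∈ {1, …, j}: Σ_{h=1}^{j−ℓ} a^j_{ℓ+h} · (−1/k)^h / h! = Σ_{h=1}^{j−ℓ} δ_{j−ℓ−h} · a^{ℓ+h−1}_ℓ. -/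
open PowerSeries Finset

theorem Finset.sum_range_succ_eq_add_sum_Icc {M : Type*} [AddCommMonoid M] (f : ℕ → M) (n : ℕ) :
    ∑ i ∈ range (n + 1), f i = f 0 + ∑ i ∈ Icc 1 n, f i := by
  rw [Nat.range_succ_eq_Icc_zero, ← insert_Icc_add_one_left_eq_Icc n.zero_le,
    sum_insert (by simp), zero_add]

theorem Ring.choose_eq_eval_descPochhammer_div (x : ℚ) (m : ℕ) :
    Ring.choose x m = (descPochhammer ℚ m).eval x / m.factorial := by
  rw [Ring.choose_eq_smul, ← Polynomial.aeval_eq_smeval, ← Polynomial.eval_map_algebraMap,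
    descPochhammer_map, smul_eq_mul, inv_mul_eq_div]

namespace PowerSeries

theorem constantCoeff_exp_sub_one (A : Type*) [Ring A] [Algebra ℚ A] :
    constantCoeff (exp A - 1) = 0 := by
  simp [constantCoeff_exp]

theorem sum_range_mul_coeff_exp_sub_one_pow_of_lt {j M : ℕ} (hj : j < M) (b : ℕ → ℚ) :
    ∑ m ∈ range M, b m * coeff j ((exp ℚ - 1) ^ m)
      = ∑ m ∈ range (j + 1), b m * coeff j ((exp ℚ - 1) ^ m) := by
  refine (sum_subset (range_subset_range.mpr hj) fun m hM hj' => ?_).symm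
  simp only [mem_range, not_lt] at hM hj'
  rw [coeff_of_lt_order _ ((Nat.cast_lt.mpr (by omega)).trans_le
    (le_order_pow_of_constantCoeff_eq_zero m (constantCoeff_exp_sub_one ℚ))), mul_zero]

theorem sum_natChoose_mul_coeff_exp_sub_one_pow (N j : ℕ) :
    ∑ m ∈ range (j + 1), (N.choose m : ℚ) * coeff j ((exp ℚ - 1) ^ m)
      = (N : ℚ) ^ j / j.factorial := by
  have hexp : exp ℚ ^ N = ∑ m ∈ range (N + 1), (N.choose m : ℚ) • (exp ℚ - 1) ^ m := by
    rw [← sub_add_cancel (exp ℚ) 1, add_pow, add_sub_cancel_right]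
    refine sum_congr rfl fun m _ => ?_
    rw [one_pow, mul_one, mul_comm, Nat.cast_smul_eq_nsmul, nsmul_eq_mul]
  have hcoeff := congrArg (coeff j) hexp
  simp only [exp_pow_eq_rescale_exp, coeff_rescale, coeff_exp, map_sum, coeff_smul,
    smul_eq_mul] at hcoeff
  have hN : ∑ m ∈ range (N + 1), (N.choose m : ℚ) * coeff j ((exp ℚ - 1) ^ m)
      = ∑ m ∈ range (N + j + 1), (N.choose m : ℚ) * coeff j ((exp ℚ - 1) ^ m) :=
    sum_subset (range_subset_range.mpr (by omega)) fun m _ hm => by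
      rw [Nat.choose_eq_zero_of_lt (by simpa using hm), Nat.cast_zero, zero_mul]
  rw [← sum_range_mul_coeff_exp_sub_one_pow_of_lt (by omega : j < N + j + 1), ← hN, ← hcoeff]
  simp [div_eq_mul_inv]

theorem sum_choose_mul_coeff_exp_sub_one_pow (x : ℚ) (j : ℕ) :
    ∑ m ∈ range (j + 1), Ring.choose x m * coeff j ((exp ℚ - 1) ^ m) = x ^ j / j.factorial := by
  let P : Polynomial ℚ := ∑ m ∈ range (j + 1),
    Polynomial.C (coeff j ((exp ℚ - 1 : ℚ⟦X⟧) ^ m) / m.factorial : ℚ) * descPochhammer ℚ m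
  let R : Polynomial ℚ := Polynomial.C (1 / j.factorial : ℚ) * Polynomial.X ^ j
  have hP (y : ℚ) :
      P.eval y = ∑ m ∈ range (j + 1), Ring.choose y m * coeff j ((exp ℚ - 1) ^ m) := by
    simp only [P, Polynomial.eval_finsetSum, Polynomial.eval_mul, Polynomial.eval_C,
      Ring.choose_eq_eval_descPochhammer_div]
    exact sum_congr rfl fun m _ => by ring
  have hR (y : ℚ) : R.eval y = y ^ j / j.factorial := by
    simp only [R, Polynomial.eval_mul, Polynomial.eval_C, Polynomial.eval_pow, Polynomial.eval_X]
    ring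
  have hPR : P = R := by
    refine Polynomial.eq_of_infinite_eval_eq P R
      (Set.infinite_of_injective_forall_mem Nat.cast_injective fun N : ℕ => ?_)
    simp only [Set.mem_ofPred_eq, hP, hR, Ring.choose_natCast]
    exact sum_natChoose_mul_coeff_exp_sub_one_pow N j
  rw [← hP, hPR, hR]

theorem coeff_mul_rescale_exp (F : ℚ⟦X⟧) (x : ℚ) (n : ℕ) :
    coeff n (F * rescale x (exp ℚ))
      = ∑ m ∈ range (n + 1), Ring.choose x m * coeff n (F * (exp ℚ - 1) ^ m) := by
  simp only [coeff_mul, mul_sum]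
  rw [sum_comm]
  refine sum_congr rfl fun p hp => ?_
  have hp2 : p.2 < n + 1 := by linarith [mem_antidiagonal.mp hp]
  rw [coeff_rescale, coeff_exp, Algebra.algebraMap_self, RingHom.id_apply, ← div_eq_mul_one_div,
    ← sum_choose_mul_coeff_exp_sub_one_pow, ← sum_range_mul_coeff_exp_sub_one_pow_of_lt hp2,
    mul_sum]
  exact sum_congr rfl fun m _ => by ring

end PowerSeries

theorem bernoulliPowerSeries_pow_mul_exp_sub_one_pow (A : Type*) [CommRing A] [Algebra ℚ A]
    {m M : ℕ} (h : m ≤ M) :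
    bernoulliPowerSeries A ^ M * (exp A - 1) ^ m = X ^ m * bernoulliPowerSeries A ^ (M - m) := by
  rw [← Nat.sub_add_cancel h, pow_add, Nat.add_sub_cancel, mul_assoc, ← mul_pow,
    bernoulliPowerSeries_mul_exp_sub_one, mul_comm]

theorem sum_bernCoef_mul_pow_div_factorial (x : ℚ) (ℓ n : ℕ) :
    ∑ h ∈ Icc 1 n, bernCoef (ℓ + n) (ℓ + h) * x ^ h / h.factorial
      = ∑ m ∈ Icc 1 n, Ring.choose x m * bernCoef (ℓ + n - m) ℓ := by
  have hL : ∑ h ∈ range (n + 1), bernCoef (ℓ + n) (ℓ + h) * x ^ h / h.factorial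
      = coeff n (bernoulliPowerSeries ℚ ^ (ℓ + n + 1) * rescale x (exp ℚ)) := by
    rw [mul_comm, coeff_mul, Nat.sum_antidiagonal_eq_sum_range_succ
      (fun i j => coeff i (rescale x (exp ℚ)) * coeff j (bernoulliPowerSeries ℚ ^ (ℓ + n + 1)))]
    refine sum_congr rfl fun h _ => ?_
    simp only [bernCoef, coeff_rescale, coeff_exp, Nat.add_sub_add_left, Algebra.algebraMap_self,
      RingHom.id_apply]
    ring
  have hR : ∑ m ∈ range (n + 1), Ring.choose x m * bernCoef (ℓ + n - m) ℓ
      = coeff n (bernoulliPowerSeries ℚ ^ (ℓ + n + 1) * rescale x (exp ℚ)) := by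
    rw [coeff_mul_rescale_exp]
    refine sum_congr rfl fun m hm => ?_
    have hmn : m ≤ n := Nat.lt_succ_iff.mp (mem_range.mp hm)
    rw [bernoulliPowerSeries_pow_mul_exp_sub_one_pow ℚ (by omega), coeff_X_pow_mul', if_pos hmn,
      bernCoef, show ℓ + n - m - ℓ = n - m by omega, show ℓ + n - m + 1 = ℓ + n + 1 - m by omega]
  rw [sum_range_succ_eq_add_sum_Icc] at hL hR
  have h0 : bernCoef (ℓ + n) (ℓ + 0) * x ^ 0 / (0 : ℕ).factorial
      = Ring.choose x 0 * bernCoef (ℓ + n - 0) ℓ := by simp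
  linarith

theorem exists_delta_general (k : ℕ) :
    ∃ δ : ℕ → ℝ, ∀ j : ℕ, 1 ≤ j → ∀ ℓ : ℕ, 1 ≤ ℓ → ℓ ≤ j →
      ∑ h ∈ Finset.Icc 1 (j - ℓ),
          (bernCoef j (ℓ + h) : ℝ) * (-1 / (k : ℝ)) ^ h / (Nat.factorial h : ℝ)
        = ∑ h ∈ Finset.Icc 1 (j - ℓ), δ (j - ℓ - h) * (bernCoef (ℓ + h - 1) ℓ : ℝ) := by
  refine ⟨fun i => Ring.choose (-1 / k : ℝ) (i + 1), fun j _ ℓ _ hℓj => ?_⟩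
  obtain ⟨n, rfl⟩ := Nat.exists_eq_add_of_le hℓj
  have hreflect : ∑ m ∈ Icc 1 n, Ring.choose (-1 / k : ℚ) m * bernCoef (ℓ + n - m) ℓ
      = ∑ h ∈ Icc 1 n, Ring.choose (-1 / k : ℚ) (n - h + 1) * bernCoef (ℓ + h - 1) ℓ := by
    refine sum_nbij' (fun m => n + 1 - m) (fun h => n + 1 - h) ?_ ?_ ?_ ?_ fun m hm => ?_
    any_goals (intro m hm; simp only [mem_Icc] at hm ⊢; omega)
    rw [mem_Icc] at hm
    rw [show n - (n + 1 - m) + 1 = m by omega, show ℓ + (n + 1 - m) - 1 = ℓ + n - m by omega]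
  have hQ := congrArg (fun q : ℚ => (q : ℝ))
    ((sum_bernCoef_mul_pow_div_factorial (-1 / k) ℓ n).trans hreflect)
  simp only [Nat.add_sub_cancel_left]
  have hcast (a : ℚ) (m : ℕ) : ((Ring.choose a m : ℚ) : ℝ) = Ring.choose (a : ℝ) m :=
    Ring.map_choose (Rat.castHom ℝ) a m
  push_cast [hcast] at hQ
  exact hQ

/-- There is a sequence `(δ_m)` of reals such that for every `j ≥ 1` and `1 ≤ ℓ ≤ j`:
`Σ_{h=1}^{j-ℓ} a^j_{ℓ+h} (-1/k)^h / h! = Σ_{h=1}^{j-ℓ} δ_{j-ℓ-h} a^{ℓ+h-1}_ℓ`. -/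
theorem exists_delta (k : ℕ) (hk : 2 ≤ k) :
    ∃ δ : ℕ → ℝ, ∀ j : ℕ, 1 ≤ j → ∀ ℓ : ℕ, 1 ≤ ℓ → ℓ ≤ j →
      ∑ h ∈ Finset.Icc 1 (j - ℓ),
          (bernCoef j (ℓ + h) : ℝ) * (-1 / (k : ℝ)) ^ h / (Nat.factorial h : ℝ)
        = ∑ h ∈ Finset.Icc 1 (j - ℓ), δ (j - ℓ - h) * (bernCoef (ℓ + h - 1) ℓ : ℝ) :=
  exists_delta_general k
end

section
/- Let x, ξ : ℝ → ℝ² be differentiable curves solving the Hamilton system ẋ(t) = g₁(x(t)) g₂(x(t)) Aᵀ x(t) and ξ̇(t) = − g₁(x(t)) g₂(x(t)) A ξ(t). Then both t ↦ ⟨x(t), ξ(t)⟩ and t ↦ ⟨x(t), A ξ(t)⟩ are constant in t; in particular, if ⟨x(0), A ξ(0)⟩ = 0 then ⟨x(t), A ξ(t)⟩ = 0 for all t. -/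
/-!
Both quantities are `⟨x, M ξ⟩` for a matrix `M` commuting with `A` (namely `M = 1` and `M = A`).
Writing `c = g₁(x) g₂(x)`, the scalar factor pulls out of the derivative:
`d/dt ⟨x, M ξ⟩ = c (⟨Aᵀx, M ξ⟩ - ⟨x, M A ξ⟩) = c ⟨x, (A M - M A) ξ⟩ = 0`.
-/

open Matrix

/-- The matrix `A = [[μ, 1], [-1, μ]]`. -/
def matA (μ : ℝ) : Matrix (Fin 2) (Fin 2) ℝ := !![μ, 1; -1, μ]

/-- `g₁(x) = |x|² - a²`. -/
def g1 (a : ℝ) (x : Fin 2 → ℝ) : ℝ := x ⬝ᵥ x - a ^ 2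

/-- `g₂(x) = b² - |x|²`. -/
def g2 (b : ℝ) (x : Fin 2 → ℝ) : ℝ := b ^ 2 - x ⬝ᵥ x

section Curves

variable {𝕜 n : Type*} [NontriviallyNormedField 𝕜] [Fintype n] {t : 𝕜}

theorem HasDerivAt.dotProduct {f g : 𝕜 → n → 𝕜} {f' g' : n → 𝕜}
    (hf : HasDerivAt f f' t) (hg : HasDerivAt g g' t) :
    HasDerivAt (fun s => f s ⬝ᵥ g s) (f' ⬝ᵥ g t + f t ⬝ᵥ g') t := by
  have := HasDerivAt.fun_sum (u := Finset.univ) fun i _ =>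
    (hasDerivAt_pi.1 hf i).fun_mul (hasDerivAt_pi.1 hg i)
  rw [Finset.sum_add_distrib] at this
  exact this

theorem HasDerivAt.mulVec {m : Type*} (M : Matrix m n 𝕜) {g : 𝕜 → n → 𝕜}
    {g' : n → 𝕜} (hg : HasDerivAt g g' t) : HasDerivAt (fun s => M *ᵥ g s) (M *ᵥ g') t :=
  hasDerivAt_pi.2 fun i => by
    have := (hasDerivAt_const t (M i)).dotProduct hg
    rw [zero_dotProduct, zero_add] at this
    exact this

end Curves

section Invariants

variable {𝕜 n : Type*} [RCLike 𝕜] [Fintype n] {B M : Matrix n n 𝕜} {x ξ : 𝕜 → n → 𝕜}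
  {c : 𝕜 → 𝕜}

theorem hasDerivAt_dotProduct_mulVec_zero_of_commute (hBM : Commute B M) {t : 𝕜}
    (hx : HasDerivAt x (c t • (Bᵀ *ᵥ x t)) t) (hξ : HasDerivAt ξ (-c t • (B *ᵥ ξ t)) t) :
    HasDerivAt (fun s => x s ⬝ᵥ M *ᵥ ξ s) 0 t := by
  convert hx.dotProduct (hξ.mulVec M) using 1
  rw [mulVec_smul, smul_dotProduct, dotProduct_smul, mulVec_transpose, ← dotProduct_mulVec,
    mulVec_mulVec, mulVec_mulVec, hBM.eq]
  simp

theorem dotProduct_mulVec_eq_of_commute (hBM : Commute B M)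
    (hx : ∀ t, HasDerivAt x (c t • (Bᵀ *ᵥ x t)) t)
    (hξ : ∀ t, HasDerivAt ξ (-c t • (B *ᵥ ξ t)) t) (t s : 𝕜) :
    x t ⬝ᵥ M *ᵥ ξ t = x s ⬝ᵥ M *ᵥ ξ s :=
  have hderiv u := hasDerivAt_dotProduct_mulVec_zero_of_commute hBM (hx u) (hξ u)
  is_const_of_deriv_eq_zero (fun u => (hderiv u).differentiableAt) (fun u => (hderiv u).deriv) t s

end Invariants

theorem hamilton_invariants_general (μ a b : ℝ) (x ξ : ℝ → Fin 2 → ℝ)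
    (hx : ∀ t : ℝ, HasDerivAt x
      ((g1 a (x t) * g2 b (x t)) • ((matA μ)ᵀ.mulVec (x t))) t)
    (hξ : ∀ t : ℝ, HasDerivAt ξ
      (-(g1 a (x t) * g2 b (x t)) • ((matA μ).mulVec (ξ t))) t) :
    (∀ t s : ℝ, x t ⬝ᵥ ξ t = x s ⬝ᵥ ξ s) ∧
    (∀ t s : ℝ, x t ⬝ᵥ (matA μ).mulVec (ξ t) = x s ⬝ᵥ (matA μ).mulVec (ξ s)) ∧
    (x 0 ⬝ᵥ (matA μ).mulVec (ξ 0) = 0 → ∀ t : ℝ, x t ⬝ᵥ (matA μ).mulVec (ξ t) = 0) := by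
  have invariant (M : Matrix (Fin 2) (Fin 2) ℝ) (hM : Commute (matA μ) M) (t s : ℝ) :=
    dotProduct_mulVec_eq_of_commute (c := fun t => g1 a (x t) * g2 b (x t)) hM hx hξ t s
  refine ⟨fun t s => ?_, invariant _ (.refl _), fun h0 t => (invariant _ (.refl _) t 0).trans h0⟩
  simpa only [one_mulVec] using invariant 1 (.one_right _) t s

/-- Along solutions of the Hamilton system `ẋ = g₁g₂ Aᵀx`, `ξ̇ = -g₁g₂ Aξ`,
both `⟨x, ξ⟩` and `⟨x, Aξ⟩` are constant; in particular `⟨x(0), Aξ(0)⟩ = 0`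
implies `⟨x(t), Aξ(t)⟩ = 0` for all `t`. -/
theorem hamilton_invariants (μ a b : ℝ) (hμ : 0 < μ) (ha : 0 < a) (hab : a < b)
    (x ξ : ℝ → Fin 2 → ℝ)
    (hx : ∀ t : ℝ, HasDerivAt x
      ((g1 a (x t) * g2 b (x t)) • ((matA μ)ᵀ.mulVec (x t))) t)
    (hξ : ∀ t : ℝ, HasDerivAt ξ
      (-(g1 a (x t) * g2 b (x t)) • ((matA μ).mulVec (ξ t))) t) :
    (∀ t s : ℝ, x t ⬝ᵥ ξ t = x s ⬝ᵥ ξ s) ∧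
    (∀ t s : ℝ, x t ⬝ᵥ (matA μ).mulVec (ξ t) = x s ⬝ᵥ (matA μ).mulVec (ξ s)) ∧
    (x 0 ⬝ᵥ (matA μ).mulVec (ξ 0) = 0 → ∀ t : ℝ, x t ⬝ᵥ (matA μ).mulVec (ξ t) = 0) :=
  hamilton_invariants_general μ a b x ξ hx hξ
end
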